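/- For any Banach spaces X and Y, n(K_{w*}(X*,Y)) ≤ min{ n(X), n(Y) }, where K_{w*}(X*,Y) is the space of compact weak*-to-weak continuous operators from X* to Y. -/

import Mathlib

open Metric Set

/-- The numerical radius of a bounded linear operator `T` on a normed space `X` over `𝕜`:
`v(T) = sup { ‖x*(Tx)‖ : x ∈ S_X, x* ∈ S_{X*}, x*(x) = 1 }`. -/
noncomputable def numRadius (𝕜 : Type*) [RCLike 𝕜] {X : Type*} [NormedAddCommGroup X]
    [NormedSpace 𝕜 X] (T : X →L[𝕜] X) : ℝ :=
  sSup {r : ℝ | ∃ (x : X) (f : X →L[𝕜] 𝕜), ‖x‖ = 1 ∧ ‖f‖ = 1 ∧ f x = 1 ∧ r = ‖f (T x)‖}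

/-- The numerical index of a normed space: `n(X) = inf { v(T) : T ∈ L(X), ‖T‖ = 1 }`. -/
noncomputable def numIndex (𝕜 : Type*) [RCLike 𝕜] (X : Type*) [NormedAddCommGroup X]
    [NormedSpace 𝕜 X] : ℝ :=
  sInf {r : ℝ | ∃ T : X →L[𝕜] X, ‖T‖ = 1 ∧ r = numRadius 𝕜 T}

/-- `v_δ(T)` computed with points taken in `A ⊆ B_X` and functionals in `B ⊆ B_{X*}`. -/
noncomputable def numRadiusDeltaOn (𝕜 : Type*) [RCLike 𝕜] {X : Type*} [NormedAddCommGroup X]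
    [NormedSpace 𝕜 X] (T : X →L[𝕜] X) (A : Set X) (B : Set (X →L[𝕜] 𝕜)) (δ : ℝ) : ℝ :=
  sSup {r : ℝ | ∃ x ∈ A, ∃ f ∈ B, 1 - δ < RCLike.re (f x) ∧ r = ‖f (T x)‖}

/-- `Z` (together with the bounded bilinear map `t`) is the projective tensor product
`X ⊗̂_π Y`: it is complete, elementary tensors have norm `‖x‖‖y‖`, and the closed unit
ball of `Z` is the closed convex hull of `B_X ⊗ B_Y`. -/
structure IsProjectiveTensorProduct (𝕜 : Type*) [RCLike 𝕜] {X Y Z : Type*}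
    [NormedAddCommGroup X] [NormedSpace 𝕜 X] [NormedAddCommGroup Y] [NormedSpace 𝕜 Y]
    [NormedAddCommGroup Z] [NormedSpace 𝕜 Z] [NormedSpace ℝ Z] [IsScalarTower ℝ 𝕜 Z]
    (t : X →L[𝕜] Y →L[𝕜] Z) : Prop where
  complete : CompleteSpace Z
  norm_tmul : ∀ x y, ‖t x y‖ = ‖x‖ * ‖y‖
  ball_eq : closedBall (0 : Z) 1 = closure (convexHull ℝ
      {z : Z | ∃ x ∈ closedBall (0 : X) 1, ∃ y ∈ closedBall (0 : Y) 1, z = t x y})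

/-- `Z` (together with the bounded bilinear map `t`) is the injective tensor product
`X ⊗̂_ε Y`: it is complete, the span of elementary tensors is dense, and on that span
the norm is the injective tensor norm. -/
structure IsInjectiveTensorProduct (𝕜 : Type*) [RCLike 𝕜] {X Y Z : Type*}
    [NormedAddCommGroup X] [NormedSpace 𝕜 X] [NormedAddCommGroup Y] [NormedSpace 𝕜 Y]
    [NormedAddCommGroup Z] [NormedSpace 𝕜 Z] (t : X →L[𝕜] Y →L[𝕜] Z) : Prop where
  complete : CompleteSpace Z
  dense_span : Dense (Submodule.span 𝕜 {z : Z | ∃ x y, z = t x y} : Set Z)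
  norm_sum : ∀ (n : ℕ) (x : Fin n → X) (y : Fin n → Y),
    ‖∑ i, t (x i) (y i)‖ = sSup {r : ℝ | ∃ (f : X →L[𝕜] 𝕜) (g : Y →L[𝕜] 𝕜),
      ‖f‖ ≤ 1 ∧ ‖g‖ ≤ 1 ∧ r = ‖∑ i, f (x i) * g (y i)‖}

/-- A slice of a bounded set `A`: `{a ∈ A : Re f(a) > sup Re f(A) - δ}`. -/
def sliceOf (𝕜 : Type*) [RCLike 𝕜] {X : Type*} [NormedAddCommGroup X] [NormedSpace 𝕜 X]
    (A : Set X) (f : X →L[𝕜] 𝕜) (δ : ℝ) : Set X :=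
  {a ∈ A | sSup {r : ℝ | ∃ b ∈ A, r = RCLike.re (f b)} - δ < RCLike.re (f a)}

/-- A set `A` is slicely countably determined (SCD) if there is a countable determining
family of slices of `A`: any `B ⊆ A` meeting every slice of the family has
closed convex hull containing `A`. -/
def IsSCD (𝕜 : Type*) [RCLike 𝕜] {X : Type*} [NormedAddCommGroup X] [NormedSpace 𝕜 X]
    [NormedSpace ℝ X] [IsScalarTower ℝ 𝕜 X] (A : Set X) : Prop :=
  ∃ V : ℕ → Set X, (∀ n, ∃ (f : X →L[𝕜] 𝕜) (δ : ℝ), 0 < δ ∧ V n = sliceOf 𝕜 A f δ) ∧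
    ∀ B ⊆ A, (∀ n, (B ∩ V n).Nonempty) → A ⊆ closure (convexHull ℝ B)

/-- The Daugavet property: `‖Id + T‖ = 1 + ‖T‖` for every rank-one operator `T`. -/
def DaugavetProperty (𝕜 : Type*) [RCLike 𝕜] (X : Type*) [NormedAddCommGroup X]
    [NormedSpace 𝕜 X] : Prop :=
  ∀ T : X →L[𝕜] X, (∃ (f : X →L[𝕜] 𝕜) (x₀ : X), ∀ x, T x = f x • x₀) →
    ‖ContinuousLinearMap.id 𝕜 X + T‖ = 1 + ‖T‖

/-! Both `S ↦ (T ↦ T ∘ S*)` on `L(X)` and `R ↦ (T ↦ R ∘ T)` on `L(Y)` are unital linear isometries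
into `L(K_{w*}(X*, Y))`: their norms are attained on the rank-one operators `f ↦ f(x) y`, which lie
in `K_{w*}(X*, Y)`. A unital linear isometry `L : L(V) → L(W)` preserves the norms `‖Id + c S‖`, and
these norms control the numerical radius, `v(S) = sup_{|μ|=1} lim_{t→0⁺} (‖Id + t μ S‖ - 1) / t`.
Hence `v(L S) ≤ v(S)` for every `S`, so `n(W) ≤ n(V)`. -/

open ContinuousLinearMap NormedSpace Filter Topology

section NumericalRange

variable {𝕜 : Type*} [RCLike 𝕜] {V W : Type*} [NormedAddCommGroup V] [NormedSpace 𝕜 V]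
  [NormedAddCommGroup W] [NormedSpace 𝕜 W]

lemma norm_apply_le_numRadius (T : V →L[𝕜] V) {x : V} {f : StrongDual 𝕜 V} (hx : ‖x‖ = 1)
    (hf : ‖f‖ = 1) (hfx : f x = 1) : ‖f (T x)‖ ≤ numRadius 𝕜 T := by
  refine le_csSup ⟨‖T‖, ?_⟩ ⟨x, f, hx, hf, hfx, rfl⟩
  rintro _ ⟨x, f, hx, hf, -, rfl⟩
  simpa [hf, hx] using f.le_opNorm_of_le (T.le_opNorm_of_le hx.le)

lemma norm_apply_le_numRadius_mul (T : V →L[𝕜] V) {v : V} {f : StrongDual 𝕜 V} (hf : ‖f‖ = 1)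
    (hfv : f v = ‖v‖) : ‖f (T v)‖ ≤ numRadius 𝕜 T * ‖v‖ := by
  rcases eq_or_ne v 0 with rfl | hv
  · simp
  have hv' : ‖v‖ ≠ 0 := norm_ne_zero_iff.mpr hv
  have key := norm_apply_le_numRadius T (x := (‖v‖ : 𝕜)⁻¹ • v) ?_ hf ?_
  · rw [map_smul, map_smul, norm_smul, norm_inv, RCLike.norm_ofReal, abs_norm] at key
    rwa [inv_mul_le_iff₀ (norm_pos_iff.mpr hv), mul_comm] at key
  · rw [norm_smul, norm_inv, RCLike.norm_ofReal, abs_norm, inv_mul_cancel₀ hv']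
  · rw [map_smul, hfv, smul_eq_mul, inv_mul_cancel₀ (RCLike.ofReal_ne_zero.mpr hv')]

lemma numRadius_nonneg (T : V →L[𝕜] V) : 0 ≤ numRadius 𝕜 T :=
  Real.sSup_nonneg fun _ ⟨_, _, _, _, _, hr⟩ => hr ▸ norm_nonneg _

lemma numIndex_nonneg (V : Type*) [NormedAddCommGroup V] [NormedSpace 𝕜 V] :
    0 ≤ numIndex 𝕜 V :=
  Real.sInf_nonneg fun _ ⟨T, _, hr⟩ => hr ▸ numRadius_nonneg T

lemma numIndex_of_subsingleton [Subsingleton V] : numIndex 𝕜 V = 0 := by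
  have hempty : {r : ℝ | ∃ T : V →L[𝕜] V, ‖T‖ = 1 ∧ r = numRadius 𝕜 T} = ∅ :=
    Set.eq_empty_of_forall_notMem fun _ ⟨T, hT, _⟩ => by
      simp [Subsingleton.elim T 0] at hT
  rw [numIndex, hempty, Real.sInf_empty]

lemma numIndex_le_numRadius {T : V →L[𝕜] V} (hT : ‖T‖ = 1) : numIndex 𝕜 V ≤ numRadius 𝕜 T :=
  csInf_le ⟨0, fun _ ⟨S, _, hr⟩ => hr ▸ numRadius_nonneg S⟩ ⟨T, hT, rfl⟩

def IsDissipative (A : V →L[𝕜] V) : Prop :=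
  ∀ (v : V) (f : StrongDual 𝕜 V), ‖f‖ = 1 → f v = ‖v‖ → RCLike.re (f (A v)) ≤ 0

lemma isDissipative_smul_sub_numRadius (T : V →L[𝕜] V) {μ : 𝕜} (hμ : ‖μ‖ ≤ 1) :
    IsDissipative (μ • T - (numRadius 𝕜 T : 𝕜) • 1) := by
  intro v f hf hfv
  have happly : f ((μ • T - (numRadius 𝕜 T : 𝕜) • 1) v)
      = μ * f (T v) - ((numRadius 𝕜 T * ‖v‖ : ℝ) : 𝕜) := by
    simp [hfv]
  rw [happly, map_sub, RCLike.ofReal_re, sub_nonpos]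
  calc RCLike.re (μ * f (T v)) ≤ ‖μ * f (T v)‖ := RCLike.re_le_norm _
    _ ≤ ‖f (T v)‖ := by rw [norm_mul]; exact mul_le_of_le_one_left (norm_nonneg _) hμ
    _ ≤ numRadius 𝕜 T * ‖v‖ := norm_apply_le_numRadius_mul T hf hfv

lemma IsDissipative.norm_le_norm_sub_smul {A : V →L[𝕜] V} (hA : IsDissipative A) {t : ℝ}
    (ht : 0 ≤ t) (v : V) : ‖v‖ ≤ ‖v - (t : 𝕜) • A v‖ := by
  rcases eq_or_ne v 0 with rfl | hv
  · simp
  obtain ⟨f, hf, hfv⟩ := exists_dual_vector 𝕜 v (norm_ne_zero_iff.mpr hv)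
  calc ‖v‖ ≤ RCLike.re (f v) - t * RCLike.re (f (A v)) := by
        rw [hfv, RCLike.ofReal_re]; nlinarith [hA v f hf hfv]
    _ = RCLike.re (f (v - (t : 𝕜) • A v)) := by simp
    _ ≤ ‖f (v - (t : 𝕜) • A v)‖ := RCLike.re_le_norm _
    _ ≤ ‖v - (t : 𝕜) • A v‖ := by simpa [hf] using f.le_opNorm (v - (t : 𝕜) • A v)

lemma IsDissipative.norm_id_add_smul_le {A : V →L[𝕜] V} (hA : IsDissipative A) {t : ℝ}
    (ht : 0 ≤ t) : ‖(1 : V →L[𝕜] V) + (t : 𝕜) • A‖ ≤ 1 + t ^ 2 * ‖A‖ ^ 2 := by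
  refine opNorm_le_bound _ (by positivity) fun v => ?_
  -- `Id - t A` maps `v + t A v` to `v - t² A² v`, and does not decrease norms
  have hres := hA.norm_le_norm_sub_smul ht (v + (t : 𝕜) • A v)
  have himage : (v + (t : 𝕜) • A v) - (t : 𝕜) • A (v + (t : 𝕜) • A v)
      = v - ((t : 𝕜) * t) • A (A v) := by
    rw [map_add, map_smul]; module
  have hsq : ‖((t : 𝕜) * t) • A (A v)‖ ≤ t ^ 2 * ‖A‖ ^ 2 * ‖v‖ := by
    rw [norm_smul, norm_mul, RCLike.norm_ofReal, abs_of_nonneg ht]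
    calc t * t * ‖A (A v)‖ ≤ t * t * (‖A‖ * (‖A‖ * ‖v‖)) := by
          gcongr; exact A.le_opNorm_of_le (A.le_opNorm v)
      _ = t ^ 2 * ‖A‖ ^ 2 * ‖v‖ := by ring
  calc ‖(1 + (t : 𝕜) • A) v‖ = ‖v + (t : 𝕜) • A v‖ := rfl
    _ ≤ ‖v - ((t : 𝕜) * t) • A (A v)‖ := himage ▸ hres
    _ ≤ ‖v‖ + t ^ 2 * ‖A‖ ^ 2 * ‖v‖ := (norm_sub_le _ _).trans (by gcongr)
    _ = (1 + t ^ 2 * ‖A‖ ^ 2) * ‖v‖ := by ring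

lemma norm_id_add_smul_le_numRadius (T : V →L[𝕜] V) {μ : 𝕜} (hμ : ‖μ‖ ≤ 1) {t : ℝ}
    (ht : 0 ≤ t) : ‖(1 : V →L[𝕜] V) + ((t : 𝕜) * μ) • T‖ ≤
      1 + t * numRadius 𝕜 T + t ^ 2 * ‖μ • T - (numRadius 𝕜 T : 𝕜) • 1‖ ^ 2 := by
  set A := μ • T - (numRadius 𝕜 T : 𝕜) • 1
  have hsplit : 1 + ((t : 𝕜) * μ) • T
      = (1 + (t : 𝕜) • A) + ((t * numRadius 𝕜 T : ℝ) : 𝕜) • (1 : V →L[𝕜] V) := by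
    simp only [A, smul_sub, smul_smul, RCLike.ofReal_mul]; module
  have hid : ‖((t * numRadius 𝕜 T : ℝ) : 𝕜) • (1 : V →L[𝕜] V)‖ ≤ t * numRadius 𝕜 T := by
    refine (norm_smul_le ((t * numRadius 𝕜 T : ℝ) : 𝕜) (1 : V →L[𝕜] V)).trans ?_
    rw [RCLike.norm_ofReal, abs_of_nonneg (mul_nonneg ht (numRadius_nonneg T))]
    exact mul_le_of_le_one_right (mul_nonneg ht (numRadius_nonneg T)) norm_id_le
  calc ‖(1 : V →L[𝕜] V) + ((t : 𝕜) * μ) • T‖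
      ≤ ‖(1 : V →L[𝕜] V) + (t : 𝕜) • A‖ + ‖((t * numRadius 𝕜 T : ℝ) : 𝕜) • (1 : V →L[𝕜] V)‖ :=
        hsplit ▸ norm_add_le _ _
    _ ≤ (1 + t ^ 2 * ‖A‖ ^ 2) + t * numRadius 𝕜 T :=
        add_le_add ((isDissipative_smul_sub_numRadius T hμ).norm_id_add_smul_le ht) hid
    _ = _ := by ring

lemma numRadius_le_of_norm_id_add_smul_le (Φ : W →L[𝕜] W) (S : V →L[𝕜] V)
    (h : ∀ c : 𝕜, ‖(1 : W →L[𝕜] W) + c • Φ‖ ≤ ‖(1 : V →L[𝕜] V) + c • S‖) :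
    numRadius 𝕜 Φ ≤ numRadius 𝕜 S := by
  refine Real.sSup_le ?_ (numRadius_nonneg S)
  rintro _ ⟨x, φ, hx, hφ, hφx, rfl⟩
  set c := φ (Φ x)
  -- for `t > 0`, `1 + t ‖c‖ ≤ ‖1 + t μ Φ‖ ≤ ‖1 + t μ S‖ ≤ 1 + t v(S) + O(t²)`
  set μ : 𝕜 := starRingEnd 𝕜 c / ‖c‖
  have hμ : ‖μ‖ ≤ 1 := by
    rw [norm_div, RCLike.norm_conj, RCLike.norm_ofReal, abs_norm]; exact div_self_le_one _
  have hμc : μ * c = ‖c‖ := by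
    rcases eq_or_ne c 0 with hc | hc
    · simp [hc]
    rw [div_mul_eq_mul_div, RCLike.conj_mul, sq, mul_div_assoc,
      div_self (RCLike.ofReal_ne_zero.mpr (norm_ne_zero_iff.mpr hc)), mul_one]
  set K := ‖μ • S - (numRadius 𝕜 S : 𝕜) • 1‖ ^ 2
  have hbound : ∀ t : ℝ, 0 < t → ‖c‖ ≤ numRadius 𝕜 S + t * K := by
    intro t ht
    have hlow : 1 + t * ‖c‖ ≤ ‖(1 : W →L[𝕜] W) + ((t : 𝕜) * μ) • Φ‖ := calc
      1 + t * ‖c‖ = RCLike.re (φ ((1 + ((t : 𝕜) * μ) • Φ) x)) := by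
          simp [hφx, mul_assoc, hμc, c]
      _ ≤ ‖φ ((1 + ((t : 𝕜) * μ) • Φ) x)‖ := RCLike.re_le_norm _
      _ ≤ ‖(1 : W →L[𝕜] W) + ((t : 𝕜) * μ) • Φ‖ := by
          simpa [hφ, hx] using
            φ.le_opNorm_of_le (((1 : W →L[𝕜] W) + ((t : 𝕜) * μ) • Φ).le_opNorm_of_le hx.le)
    have := hlow.trans ((h _).trans (norm_id_add_smul_le_numRadius S hμ ht.le))
    nlinarith
  have hlim : Tendsto (fun t : ℝ => numRadius 𝕜 S + t * K) (𝓝[>] 0) (𝓝 (numRadius 𝕜 S)) :=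
    ((continuous_const.add (continuous_id.mul continuous_const)).tendsto' 0 _
      (by simp)).mono_left nhdsWithin_le_nhds
  exact ge_of_tendsto hlim (eventually_nhdsWithin_of_forall hbound)

lemma numIndex_le_of_linearIsometry [Nontrivial V] (L : (V →L[𝕜] V) →ₗᵢ[𝕜] (W →L[𝕜] W))
    (hL : L 1 = 1) : numIndex 𝕜 W ≤ numIndex 𝕜 V := by
  refine le_csInf ⟨_, 1, norm_one, rfl⟩ ?_
  rintro _ ⟨S, hS, rfl⟩
  refine (numIndex_le_numRadius (T := L S) (by rw [L.norm_map, hS])).trans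
    (numRadius_le_of_norm_id_add_smul_le _ _ fun c => ?_)
  rw [← hL, ← L.map_smul, ← L.map_add, L.norm_map]

end NumericalRange

section OperatorsOnDual

variable {𝕜 : Type*} [RCLike 𝕜] {X X' Y : Type*} [NormedAddCommGroup X] [NormedSpace 𝕜 X]
  [NormedAddCommGroup X'] [NormedSpace 𝕜 X'] [NormedAddCommGroup Y] [NormedSpace 𝕜 Y]

lemma norm_precomp_le (S : X →L[𝕜] X') :
    ‖(precomp Y S : (X' →L[𝕜] Y) →L[𝕜] X →L[𝕜] Y)‖ ≤ ‖S‖ :=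
  opNorm_le_bound _ (norm_nonneg S) fun T => by
    rw [precomp_apply, mul_comm]; exact opNorm_comp_le T S

variable (𝕜) in
noncomputable def dualRankOne (x : X) (y : Y) : StrongDual 𝕜 X →L[𝕜] Y :=
  (inclusionInDoubleDual 𝕜 X x).smulRight y

@[simp] lemma dualRankOne_apply (x : X) (y : Y) (f : StrongDual 𝕜 X) :
    dualRankOne 𝕜 x y f = f x • y := rfl

lemma norm_dualRankOne (x : X) (y : Y) : ‖dualRankOne 𝕜 x y‖ = ‖x‖ * ‖y‖ := by
  rw [dualRankOne, norm_smulRight_apply]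
  exact congrArg (· * ‖y‖) ((inclusionInDoubleDualLi 𝕜).norm_map x)

lemma dualRankOne_comp_precomp (x : X) (y : Y) (S : X →L[𝕜] X') :
    dualRankOne 𝕜 x y ∘L precomp 𝕜 S = dualRankOne 𝕜 (S x) y := rfl

lemma comp_dualRankOne (x : X) (y : Y) (R : Y →L[𝕜] X') :
    R ∘L dualRankOne 𝕜 x y = dualRankOne 𝕜 x (R y) := by
  ext; simp

lemma isCompactOperator_dualRankOne (x : X) (y : Y) : IsCompactOperator (dualRankOne 𝕜 x y) :=
  (isCompactOperator_of_locallyCompactSpace_dom (inclusionInDoubleDual 𝕜 X x)).continuous_comp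
    (continuous_id.smul continuous_const)

variable (𝕜) in
def IsWeakStarWeakContinuous (T : StrongDual 𝕜 X →L[𝕜] Y) : Prop :=
  Continuous fun f : WeakDual 𝕜 X => toWeakSpace 𝕜 Y (T (WeakDual.toStrongDual f))

lemma isWeakStarWeakContinuous_dualRankOne (x : X) (y : Y) :
    IsWeakStarWeakContinuous 𝕜 (dualRankOne 𝕜 x y) :=
  WeakBilin.continuous_of_continuous_eval _ fun g => by
    change Continuous fun f : WeakDual 𝕜 X => g (f x • y)
    simp only [map_smul, smul_eq_mul]
    exact (WeakDual.eval_continuous x).mul continuous_const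

lemma IsWeakStarWeakContinuous.comp_precomp {T : StrongDual 𝕜 X →L[𝕜] Y}
    (hT : IsWeakStarWeakContinuous 𝕜 T) (S : X →L[𝕜] X') :
    IsWeakStarWeakContinuous 𝕜 (T ∘L precomp 𝕜 S) :=
  hT.comp (WeakDual.continuous_of_continuous_eval fun x => WeakDual.eval_continuous (S x))

lemma IsWeakStarWeakContinuous.clm_comp {T : StrongDual 𝕜 X →L[𝕜] Y}
    (hT : IsWeakStarWeakContinuous 𝕜 T) (R : Y →L[𝕜] X') :
    IsWeakStarWeakContinuous 𝕜 (R ∘L T) :=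
  WeakBilin.continuous_of_continuous_eval _ fun g => (WeakBilin.eval_continuous _ (g ∘L R)).comp hT

-- Instance search does not find these through the `ContinuousLinearMap` structure on `StrongDual`.
noncomputable instance (Z : Submodule 𝕜 (StrongDual 𝕜 X →L[𝕜] Y)) : NormedAddCommGroup Z :=
  @Submodule.normedAddCommGroup 𝕜 (StrongDual 𝕜 X →L[𝕜] Y) _ _ _ Z

noncomputable instance (Z : Submodule 𝕜 (StrongDual 𝕜 X →L[𝕜] Y)) : NormedSpace 𝕜 Z :=
  @Submodule.normedSpace 𝕜 𝕜 _ _ _ (StrongDual 𝕜 X →L[𝕜] Y) _ _ _ _ Z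

variable (Z : Submodule 𝕜 (StrongDual 𝕜 X →L[𝕜] Y))

lemma norm_restrict_comp_precomp [Nontrivial Y] (hrank : ∀ x y, dualRankOne 𝕜 x y ∈ Z)
    (S : X →L[𝕜] X)
    (hS : ∀ T ∈ Z, (compL 𝕜 (StrongDual 𝕜 X) (StrongDual 𝕜 X) Y).flip (precomp 𝕜 S) T ∈ Z) :
    ‖((compL 𝕜 (StrongDual 𝕜 X) (StrongDual 𝕜 X) Y).flip (precomp 𝕜 S)).restrict hS‖
      = ‖S‖ := by
  apply le_antisymm
  · refine opNorm_le_bound _ (norm_nonneg S) fun T => ?_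
    calc ‖(T : StrongDual 𝕜 X →L[𝕜] Y) ∘L precomp 𝕜 S‖
        ≤ ‖(T : StrongDual 𝕜 X →L[𝕜] Y)‖ * ‖precomp 𝕜 S‖ := opNorm_comp_le _ _
      _ ≤ ‖S‖ * ‖T‖ := by
          rw [mul_comm]; exact mul_le_mul_of_nonneg_right (norm_precomp_le S) (norm_nonneg _)
  · obtain ⟨y, hy⟩ := exists_ne (0 : Y)
    refine opNorm_le_bound _ (norm_nonneg _) fun x =>
      le_of_mul_le_mul_right ?_ (norm_pos_iff.2 hy)
    simpa [norm_dualRankOne, mul_assoc, dualRankOne_comp_precomp] using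
      (((compL 𝕜 (StrongDual 𝕜 X) (StrongDual 𝕜 X) Y).flip (precomp 𝕜 S)).restrict hS).le_opNorm
        ⟨dualRankOne 𝕜 x y, hrank x y⟩

lemma norm_restrict_compL [Nontrivial X] (hrank : ∀ x y, dualRankOne 𝕜 x y ∈ Z) (R : Y →L[𝕜] Y)
    (hR : ∀ T ∈ Z, compL 𝕜 (StrongDual 𝕜 X) Y Y R T ∈ Z) :
    ‖(compL 𝕜 (StrongDual 𝕜 X) Y Y R).restrict hR‖ = ‖R‖ := by
  apply le_antisymm
  · exact opNorm_le_bound _ (norm_nonneg R) fun T => opNorm_comp_le R (T : StrongDual 𝕜 X →L[𝕜] Y)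
  · obtain ⟨x, hx⟩ := exists_ne (0 : X)
    refine opNorm_le_bound _ (norm_nonneg _) fun y =>
      le_of_mul_le_mul_left ?_ (norm_pos_iff.2 hx)
    simpa [norm_dualRankOne, comp_dualRankOne, mul_left_comm ‖x‖] using
      ((compL 𝕜 (StrongDual 𝕜 X) Y Y R).restrict hR).le_opNorm ⟨dualRankOne 𝕜 x y, hrank x y⟩

noncomputable def precompDualₗᵢ [Nontrivial Y]
    (hZ : ∀ S : X →L[𝕜] X, ∀ T ∈ Z, T ∘L precomp 𝕜 S ∈ Z)
    (hrank : ∀ x y, dualRankOne 𝕜 x y ∈ Z) : (X →L[𝕜] X) →ₗᵢ[𝕜] Z →L[𝕜] Z where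
  toFun S := ((compL 𝕜 (StrongDual 𝕜 X) (StrongDual 𝕜 X) Y).flip (precomp 𝕜 S)).restrict (hZ S)
  map_add' S S' := by
    ext T f
    exact congrArg (T : StrongDual 𝕜 X →L[𝕜] Y) (comp_add f S S') |>.trans (map_add _ _ _)
  map_smul' c S := by
    ext T f
    exact congrArg (T : StrongDual 𝕜 X →L[𝕜] Y) (comp_smul f c S) |>.trans (map_smul _ _ _)
  norm_map' S := norm_restrict_comp_precomp Z hrank S (hZ S)

noncomputable def postcompₗᵢ [Nontrivial X] (hZ : ∀ R : Y →L[𝕜] Y, ∀ T ∈ Z, R ∘L T ∈ Z)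
    (hrank : ∀ x y, dualRankOne 𝕜 x y ∈ Z) : (Y →L[𝕜] Y) →ₗᵢ[𝕜] Z →L[𝕜] Z where
  toFun R := (compL 𝕜 (StrongDual 𝕜 X) Y Y R).restrict (hZ R)
  map_add' _ _ := rfl
  map_smul' _ _ := rfl
  norm_map' R := norm_restrict_compL Z hrank R (hZ R)

end OperatorsOnDual

theorem numIndex_weakStarCompactOperators_le_min_general {𝕜 X Y : Type*} [RCLike 𝕜]
    [NormedAddCommGroup X] [NormedSpace 𝕜 X]
    [NormedAddCommGroup Y] [NormedSpace 𝕜 Y]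
    (Z : Submodule 𝕜 (StrongDual 𝕜 X →L[𝕜] Y))
    (hZ : ∀ T : StrongDual 𝕜 X →L[𝕜] Y, T ∈ Z ↔
      (IsCompactOperator T ∧
        Continuous (fun f : WeakDual 𝕜 X => toWeakSpace 𝕜 Y (T (WeakDual.toStrongDual f))))) :
    @numIndex 𝕜 _ ↥Z (@Submodule.normedAddCommGroup 𝕜 (StrongDual 𝕜 X →L[𝕜] Y) _ _ _ Z)
      (@Submodule.normedSpace 𝕜 𝕜 _ _ _ (StrongDual 𝕜 X →L[𝕜] Y) _ _ _ _ Z) ≤ min (numIndex 𝕜 X) (numIndex 𝕜 Y) := by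
  have hmin := le_min (numIndex_nonneg (𝕜 := 𝕜) X) (numIndex_nonneg (𝕜 := 𝕜) Y)
  rcases subsingleton_or_nontrivial X with hX | hX
  · rwa [numIndex_of_subsingleton]
  rcases subsingleton_or_nontrivial Y with hY | hY
  · rwa [numIndex_of_subsingleton]
  have hrank : ∀ x y, dualRankOne 𝕜 x y ∈ Z := fun x y =>
    (hZ _).2 ⟨isCompactOperator_dualRankOne x y, isWeakStarWeakContinuous_dualRankOne x y⟩
  have hpre : ∀ S : X →L[𝕜] X, ∀ T ∈ Z, T ∘L precomp 𝕜 S ∈ Z := fun S T hT =>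
    have hT := (hZ T).1 hT
    (hZ _).2 ⟨hT.1.comp_clm _, IsWeakStarWeakContinuous.comp_precomp hT.2 S⟩
  have hpost : ∀ R : Y →L[𝕜] Y, ∀ T ∈ Z, R ∘L T ∈ Z := fun R T hT =>
    have hT := (hZ T).1 hT
    (hZ _).2 ⟨hT.1.clm_comp R, IsWeakStarWeakContinuous.clm_comp hT.2 R⟩
  exact le_min (numIndex_le_of_linearIsometry (precompDualₗᵢ Z hpre hrank) (by ext; rfl))
    (numIndex_le_of_linearIsometry (postcompₗᵢ Z hpost hrank) (by ext; rfl))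

/-- `n(K_{w*}(X*,Y)) ≤ min{n(X), n(Y)}`, where `K_{w*}(X*,Y)` is the space of
compact weak*-to-weak continuous operators from `X*` to `Y`, with the operator norm. -/
theorem numIndex_weakStarCompactOperators_le_min {𝕜 X Y : Type*} [RCLike 𝕜]
    [NormedAddCommGroup X] [NormedSpace 𝕜 X] [CompleteSpace X]
    [NormedAddCommGroup Y] [NormedSpace 𝕜 Y] [CompleteSpace Y]
    (Z : Submodule 𝕜 (StrongDual 𝕜 X →L[𝕜] Y))
    (hZ : ∀ T : StrongDual 𝕜 X →L[𝕜] Y, T ∈ Z ↔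
      (IsCompactOperator T ∧
        Continuous (fun f : WeakDual 𝕜 X => toWeakSpace 𝕜 Y (T (WeakDual.toStrongDual f))))) :
    @numIndex 𝕜 _ ↥Z (@Submodule.normedAddCommGroup 𝕜 (StrongDual 𝕜 X →L[𝕜] Y) _ _ _ Z)
      (@Submodule.normedSpace 𝕜 𝕜 _ _ _ (StrongDual 𝕜 X →L[𝕜] Y) _ _ _ _ Z) ≤ min (numIndex 𝕜 X) (numIndex 𝕜 Y) :=
  numIndex_weakStarCompactOperators_le_min_general Z hZ
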